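/- There is no infinite 7/3-power-free binary word w for which there exists a constant C such that at every position of w there begins a square of length at most C. -/

import Mathlib

def mu (w : List Bool) : List Bool := w.flatMap (fun b => if b then [true, false] else [false, true])

def isPow (beta : ℚ) (w : List Bool) : Prop :=
  ∃ (n : ℕ) (x x' : List Bool), x ≠ [] ∧ x' <+: x ∧
    w = (List.replicate n x).flatten ++ x' ∧ beta = n + (x'.length : ℚ) / (x.length : ℚ)

def PowFree (a : ℚ) (w : List Bool) : Prop :=
  ∀ v, v <:+: w → ∀ beta : ℚ, a ≤ beta → ¬ isPow beta v

def OverlapFree (w : List Bool) : Prop :=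
  ∀ u v : List Bool, u ≠ [] → ¬ (u ++ v ++ u ++ v ++ u) <:+: w

def seg (w : ℕ → Bool) (i n : ℕ) : List Bool := (List.range n).map (fun j => w (i + j))

def FactorOf (v : List Bool) (w : ℕ → Bool) : Prop := ∃ i, v = seg w i v.length

def PowFreeInf (a : ℚ) (w : ℕ → Bool) : Prop :=
  ∀ v, FactorOf v w → ∀ beta : ℚ, a ≤ beta → ¬ isPow beta v

def OverlapFreeInf (w : ℕ → Bool) : Prop :=
  ∀ u v : List Bool, u ≠ [] → ¬ FactorOf (u ++ v ++ u ++ v ++ u) w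

def SqLenAt (w : ℕ → Bool) (i m : ℕ) : Prop := ∀ j < m, w (i + j) = w (i + m + j)

def SqAt (w : ℕ → Bool) (i : ℕ) : Prop := ∃ m, 0 < m ∧ SqLenAt w i m

/-!
A 7/3-power-free binary word contains neither a cube `aaa`, nor `ababa`, nor `baabaab`.
Consequently two occurrences of `aa` or `bb` starting at positions `≥ 1` are an even distance
apart, so from position `c = 1` or `c = 2` on the word is `μ(v)` for the Thue–Morse morphism
`μ : a ↦ ab, b ↦ ba`, where `v j = w (c + 2 * j)`. Since `μ` maps `β`-powers to `β`-powers, `v`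
is again 7/3-power-free, and a square starting at an even offset of a `μ`-image has even period,
so `v` has a square of length at most `C / 2` at every position. Halving `C` repeatedly leaves no
room for a square.
-/

@[simp]
theorem length_seg (w : ℕ → Bool) (t n : ℕ) : (seg w t n).length = n := by simp [seg]

theorem seg_add (w : ℕ → Bool) (t a b : ℕ) : seg w t (a + b) = seg w t a ++ seg w (t + a) b := by
  simp [seg, List.range_add, Nat.add_assoc]

theorem factorOf_seg (w : ℕ → Bool) (t n : ℕ) : FactorOf (seg w t n) w := ⟨t, by simp⟩

theorem seg_eq_flatten_replicate {w : ℕ → Bool} {t p r : ℕ} :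
    ∀ n, (∀ j, j + p < n * p + r → w (t + j) = w (t + j + p)) →
      seg w t (n * p + r) = (List.replicate n (seg w t p)).flatten ++ seg w t r
  | 0, _ => by simp
  | n + 1, hper => by
    have hshift : seg w (t + p) (n * p + r) = seg w t (n * p + r) := by
      refine List.map_congr_left fun j hj => ?_
      rw [List.mem_range] at hj
      rw [hper j (by linarith), add_right_comm]
    rw [List.replicate_succ, List.flatten_cons, List.append_assoc,
      ← seg_eq_flatten_replicate n fun j hj => hper j (by linarith),
      ← hshift, ← seg_add, Nat.succ_mul, Nat.add_comm _ p, Nat.add_assoc]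

theorem PowFreeInf.not_periodic {a : ℚ} {w : ℕ → Bool} (hw : PowFreeInf a w) {t p L : ℕ}
    (hp : 0 < p) (ha : a ≤ (L : ℚ) / p) (hper : ∀ j, j + p < L → w (t + j) = w (t + j + p)) :
    False := by
  have hL : L / p * p + L % p = L := Nat.div_add_mod' L p
  refine hw (seg w t L) (factorOf_seg w t L) _ ha
    ⟨L / p, seg w t p, seg w t (L % p), ?_, ?_, ?_, ?_⟩
  · rw [← List.length_pos_iff]; simpa
  · obtain ⟨k, hk⟩ := Nat.exists_eq_add_of_le (Nat.mod_lt L hp).le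
    exact ⟨seg w (t + L % p) k, by rw [← seg_add, ← hk]⟩
  · rw [← seg_eq_flatten_replicate _ (by rwa [hL]), hL]
  · rw [length_seg, length_seg, div_eq_iff (by positivity)]
    nth_rewrite 1 [← hL]
    push_cast
    field_simp

@[simp]
theorem mu_append (a b : List Bool) : mu (a ++ b) = mu a ++ mu b := List.flatMap_append

@[simp]
theorem mu_singleton (b : Bool) : mu [b] = [b, !b] := by cases b <;> rfl

@[simp]
theorem length_mu (a : List Bool) : (mu a).length = 2 * a.length := by
  induction a with
  | nil => rfl
  | cons b a ih => cases b <;> simp [mu] at ih ⊢ <;> omega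

theorem mu_flatten_replicate (n : ℕ) (x : List Bool) :
    mu (List.replicate n x).flatten = (List.replicate n (mu x)).flatten := by
  induction n with
  | zero => rfl
  | succ n ih => simp [List.replicate_succ, ih]

theorem isPow_mu {beta : ℚ} {v : List Bool} (h : isPow beta v) : isPow beta (mu v) := by
  obtain ⟨n, x, x', hx, ⟨r, hr⟩, rfl, rfl⟩ := h
  refine ⟨n, mu x, mu x', ?_, ⟨mu r, by rw [← mu_append, hr]⟩, ?_, ?_⟩
  · rw [← List.length_pos_iff] at hx ⊢
    simpa using hx
  · rw [mu_append, mu_flatten_replicate]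
  · push_cast [length_mu]
    rw [mul_div_mul_left _ _ two_ne_zero]

theorem Bool.eq_of_ne_of_ne {a b c : Bool} (hab : a ≠ b) (hbc : b ≠ c) : a = c := by
  cases a <;> cases b <;> cases c <;> simp_all

section Doubles

variable {w : ℕ → Bool} (hw : PowFreeInf (7/3) w)
include hw

theorem PowFreeInf.not_cube (t : ℕ) (h₁ : w t = w (t + 1)) (h₂ : w (t + 1) = w (t + 2)) :
    False :=
  hw.not_periodic (t := t) (p := 1) (L := 3) one_pos (by norm_num) fun j hj => by
    obtain rfl | rfl : j = 0 ∨ j = 1 := by omega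
    exacts [h₁, h₂]

theorem PowFreeInf.not_alternating (t : ℕ) (h : ∀ j < 4, w (t + j) ≠ w (t + j + 1)) : False :=
  hw.not_periodic (t := t) (p := 2) (L := 5) two_pos (by norm_num) fun j hj =>
    Bool.eq_of_ne_of_ne (h j (by omega)) (h (j + 1) (by omega))

theorem PowFreeInf.not_double_of_odd :
    ∀ d, Odd d → ∀ u, 1 ≤ u → w u = w (u + 1) → w (u + d) = w (u + d + 1) → False := by
  intro d
  induction d using Nat.strong_induction_on with
  | _ d ih =>
  intro hd u hu hfirst hlast
  by_cases hmid : ∃ s, u < s ∧ s < u + d ∧ w s = w (s + 1)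
  · obtain ⟨s, hus, hsd, hs⟩ := hmid
    rcases Nat.even_or_odd (s - u) with heven | hodd
    · refine ih (u + d - s) (by omega) ?_ s (by omega) hs (by rwa [Nat.add_sub_cancel' hsd.le])
      obtain ⟨k, hk⟩ := hd; obtain ⟨l, hl⟩ := heven
      exact ⟨k - l, by omega⟩
    · exact ih (s - u) (by omega) hodd u hu hfirst (by rwa [Nat.add_sub_cancel' hus.le])
  push Not at hmid
  obtain ⟨k, rfl⟩ := hd
  rcases k with _ | _ | k
  · exact hw.not_cube u hfirst hlast
  · obtain ⟨t, rfl⟩ : ∃ t, u = t + 1 := ⟨u - 1, by omega⟩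
    have h₂ := hmid (t + 2) (by omega) (by omega)
    have h₃ := hmid (t + 3) (by omega) (by omega)
    by_cases h₀ : w t = w (t + 1)
    · exact hw.not_cube t h₀ hfirst
    by_cases h₅ : w (t + 5) = w (t + 6)
    · exact hw.not_cube (t + 4) hlast h₅
    -- `b a a b a a b`: a 7/3-power with period 3
    refine hw.not_periodic (t := t) (p := 3) (L := 7) three_pos (by norm_num) fun j hj => ?_
    obtain rfl | rfl | rfl | rfl : j = 0 ∨ j = 1 ∨ j = 2 ∨ j = 3 := by omega
    · exact Bool.eq_of_ne_of_ne (hfirst ▸ h₀) h₂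
    · exact hfirst.trans (Bool.eq_of_ne_of_ne h₂ h₃)
    · exact (Bool.eq_of_ne_of_ne h₂ h₃).trans hlast
    · exact Bool.eq_of_ne_of_ne (hlast ▸ h₃) h₅
  · exact hw.not_alternating (u + 1) fun j hj => hmid (u + 1 + j) (by omega) (by omega)

theorem PowFreeInf.even_add_of_double {u v : ℕ} (hu : 1 ≤ u) (hv : 1 ≤ v)
    (hu' : w u = w (u + 1)) (hv' : w v = w (v + 1)) : Even (u + v) := by
  wlog huv : u ≤ v generalizing u v
  · rw [add_comm]; exact this hv hu hv' hu' (by omega)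
  by_contra hodd
  obtain ⟨k, hk⟩ := Nat.not_even_iff_odd.mp hodd
  obtain ⟨d, rfl⟩ := Nat.exists_eq_add_of_le huv
  exact hw.not_double_of_odd d ⟨k - u, by omega⟩ u hu hu' hv'

end Doubles

/-- `w` read from position `c` is `mu` of its letters `j ↦ w (c + 2 * j)`. -/
def IsMuImageFrom (c : ℕ) (w : ℕ → Bool) : Prop := ∀ j, w (c + 2 * j + 1) = !w (c + 2 * j)

theorem PowFreeInf.exists_isMuImageFrom {w : ℕ → Bool} (hw : PowFreeInf (7/3) w) :
    ∃ c, IsMuImageFrom c w := by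
  by_contra! h
  simp only [IsMuImageFrom, not_forall] at h
  obtain ⟨j₁, h₁⟩ := h 1
  obtain ⟨j₂, h₂⟩ := h 2
  rw [Bool.eq_not, not_not] at h₁ h₂
  obtain ⟨k, hk⟩ := hw.even_add_of_double (by omega) (by omega) h₁.symm h₂.symm
  omega

namespace IsMuImageFrom

variable {c : ℕ} {w : ℕ → Bool} (h : IsMuImageFrom c w)
include h

theorem mu_seg (i : ℕ) :
    ∀ k, mu (seg (fun j => w (c + 2 * j)) i k) = seg w (c + 2 * i) (2 * k)
  | 0 => rfl
  | k + 1 => by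
    rw [seg_add, mu_append, mu_seg i k, Nat.mul_succ, seg_add]
    congr 1
    have hpos : c + 2 * i + 2 * k = c + 2 * (i + k) := by ring
    simp [seg, List.range_succ, hpos, ← h (i + k)]

theorem powFreeInf {a : ℚ} (hw : PowFreeInf a w) : PowFreeInf a (fun j => w (c + 2 * j)) := by
  rintro v ⟨i, hi⟩ beta hbeta hpow
  have hmu : mu v = seg w (c + 2 * i) (mu v).length := by
    rw [length_mu, ← h.mu_seg]
    nth_rewrite 1 [hi]
    rfl
  exact hw (mu v) ⟨c + 2 * i, hmu⟩ beta hbeta (isPow_mu hpow)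

theorem even_of_sqLenAt {i m : ℕ} (hsq : SqLenAt w (c + 2 * i) m) : Even m := by
  by_contra hodd
  obtain ⟨k, rfl⟩ := Nat.not_even_iff_odd.mp hodd
  set v : ℕ → Bool := fun j => w (c + 2 * j)
  have hcross : ∀ l ≤ k, v (i + l) = !v (i + k + l) := fun l hl => by
    have := hsq (2 * l) (by omega)
    rwa [show c + 2 * i + (2 * k + 1) + 2 * l = c + 2 * (i + k + l) + 1 by ring, h,
      show c + 2 * i + 2 * l = c + 2 * (i + l) by ring] at this
  have hcross' : ∀ l < k, (!v (i + l)) = v (i + k + l + 1) := fun l hl => by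
    have := hsq (2 * l + 1) (by omega)
    rwa [show c + 2 * i + (2 * l + 1) = c + 2 * (i + l) + 1 by ring, h,
      show c + 2 * i + (2 * k + 1) + (2 * l + 1) = c + 2 * (i + k + l + 1) by ring] at this
  -- hence `v (i + k) = ⋯ = v (i + 2 * k)`, contradicting `hcross k`
  have hrun : ∀ l ≤ k, v (i + k + l) = v (i + k) := by
    intro l hl
    induction l with
    | zero => rfl
    | succ l ih =>
      rw [← ih (by omega), ← add_assoc, ← hcross' l (by omega), hcross l (by omega), Bool.not_not]
  have := hcross k le_rfl
  rw [hrun k le_rfl] at this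
  exact (Bool.eq_not_self _).mp this

end IsMuImageFrom

def Squareful (C : ℕ) (w : ℕ → Bool) : Prop := ∀ i, ∃ m, 0 < m ∧ 2 * m ≤ C ∧ SqLenAt w i m

theorem IsMuImageFrom.squareful {c C : ℕ} {w : ℕ → Bool} (h : IsMuImageFrom c w)
    (hw : Squareful C w) : Squareful (C / 2) (fun j => w (c + 2 * j)) := by
  intro i
  obtain ⟨m, hm, hmC, hsq⟩ := hw (c + 2 * i)
  obtain ⟨m, rfl⟩ := h.even_of_sqLenAt hsq
  refine ⟨m, by omega, by omega, fun j hj => ?_⟩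
  have := hsq (2 * j) (by omega)
  rwa [show c + 2 * i + 2 * j = c + 2 * (i + j) by ring,
    show c + 2 * i + (m + m) + 2 * j = c + 2 * (i + m + j) by ring] at this

theorem PowFreeInf.not_squareful {C : ℕ} {w : ℕ → Bool} (hw : PowFreeInf (7/3) w) :
    ¬ Squareful C w := by
  induction C using Nat.strong_induction_on generalizing w with
  | _ C ih =>
  intro hsq
  obtain ⟨c, hc⟩ := hw.exists_isMuImageFrom
  obtain ⟨m, hm, hmC, -⟩ := hsq 0
  exact ih (C / 2) (by omega) (hc.powFreeInf hw) (hc.squareful hsq)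

theorem stmt19 :
    ¬ ∃ (w : ℕ → Bool) (C : ℕ), PowFreeInf (7/3) w ∧
        ∀ i, ∃ m, 0 < m ∧ 2 * m ≤ C ∧ SqLenAt w i m := by
  rintro ⟨w, C, hw, hsq⟩
  exact hw.not_squareful hsq
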